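/- arXiv:1203.0709 — 3 statements merged into one kernel-verified Lean document; each statement's English description precedes it below -/
import Mathlib

section
/- Let k ≥ 2 and let M be an incidence matrix of a symmetric configuration v_k. If M contains θ ≥ 1 pairwise disjoint E-aggregates, then there exists an incidence matrix of a symmetric configuration (v+θ)_k. -/
/-- An incidence matrix of a symmetric configuration `v_k`: a `v × v` 0,1-matrix
(values in `Bool`) with all row and column sums equal to `k` that is `J₂`-free. -/
def IsIncidenceMatrix (v k : ℕ) (M : Matrix (Fin v) (Fin v) Bool) : Prop :=
  (∀ i, (Finset.univ.filter (fun j => M i j = true)).card = k) ∧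
  (∀ j, (Finset.univ.filter (fun i => M i j = true)).card = k) ∧
  ∀ i i' j j', i ≠ i' → j ≠ j' →
    ¬(M i j = true ∧ M i j' = true ∧ M i' j = true ∧ M i' j' = true)

/-- An E-aggregate of `M`: a set `R` of `k-1` rows corresponding to pairwise disjoint
lines (no column has a one in two distinct rows of `R`), a set `C` of `k-1` columns
corresponding to pairwise non-collinear points (no row has a one in two distinct
columns of `C`), such that the `(k-1) × (k-1)` submatrix on `R × C` is a
permutation matrix. -/
def IsEAggregate (v k : ℕ) (M : Matrix (Fin v) (Fin v) Bool)
    (R C : Finset (Fin v)) : Prop :=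
  R.card = k - 1 ∧ C.card = k - 1 ∧
  (∀ j : Fin v, ∀ i ∈ R, ∀ i' ∈ R, i ≠ i' → ¬(M i j = true ∧ M i' j = true)) ∧
  (∀ i : Fin v, ∀ j ∈ C, ∀ j' ∈ C, j ≠ j' → ¬(M i j = true ∧ M i j' = true)) ∧
  (∀ i ∈ R, ∃! j : Fin v, j ∈ C ∧ M i j = true) ∧
  (∀ j ∈ C, ∃! i : Fin v, i ∈ R ∧ M i j = true)


open Finset

section Aux

variable {v k θ : ℕ}

def newMat (M : Matrix (Fin v) (Fin v) Bool)
    (F : Fin θ → Finset (Fin v) × Finset (Fin v)) :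
    Matrix (Fin v ⊕ Fin θ) (Fin v ⊕ Fin θ) Bool
  | Sum.inl i, Sum.inl j => M i j && !(decide (∃ a, i ∈ (F a).1 ∧ j ∈ (F a).2))
  | Sum.inl i, Sum.inr a => decide (i ∈ (F a).1)
  | Sum.inr a, Sum.inl j => decide (j ∈ (F a).2)
  | Sum.inr a, Sum.inr b => decide (a = b)

lemma card_filter_unique {α : Type*} [Fintype α] [DecidableEq α] {p : α → Prop}
    [DecidablePred p] (h : ∃! x, p x) : (univ.filter p).card = 1 := by
  obtain ⟨x, hx, hu⟩ := h
  rw [Finset.card_eq_one]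
  refine ⟨x, ?_⟩
  ext y
  simp only [mem_filter, mem_univ, true_and, mem_singleton]
  exact ⟨fun hy => hu y hy, fun e => e ▸ hx⟩

lemma card_filter_sum {α β : Type*} [Fintype α] [Fintype β]
    (P : α ⊕ β → Prop) [DecidablePred P] :
    (univ.filter P).card =
      (univ.filter (fun a => P (Sum.inl a))).card +
      (univ.filter (fun b => P (Sum.inr b))).card := by
  rw [Finset.card_filter, Finset.card_filter, Finset.card_filter, Fintype.sum_sum_type]

section Main

variable (hk : 2 ≤ k)
  (M : Matrix (Fin v) (Fin v) Bool)
  (F : Fin θ → Finset (Fin v) × Finset (Fin v))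
  (hrow : ∀ i, (Finset.univ.filter (fun j => M i j = true)).card = k)
  (hcol : ∀ j, (Finset.univ.filter (fun i => M i j = true)).card = k)
  (hJ2 : ∀ i i' j j', i ≠ i' → j ≠ j' →
    ¬(M i j = true ∧ M i j' = true ∧ M i' j = true ∧ M i' j' = true))
  (hR : ∀ a, (F a).1.card = k - 1)
  (hC : ∀ a, (F a).2.card = k - 1)
  (hRdis : ∀ a, ∀ j : Fin v, ∀ i ∈ (F a).1, ∀ i' ∈ (F a).1, i ≠ i' →
    ¬(M i j = true ∧ M i' j = true))
  (hCdis : ∀ a, ∀ i : Fin v, ∀ j ∈ (F a).2, ∀ j' ∈ (F a).2, j ≠ j' →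
    ¬(M i j = true ∧ M i j' = true))
  (hperm1 : ∀ a, ∀ i ∈ (F a).1, ∃! j : Fin v, j ∈ (F a).2 ∧ M i j = true)
  (hperm2 : ∀ a, ∀ j ∈ (F a).2, ∃! i : Fin v, i ∈ (F a).1 ∧ M i j = true)
  (huR : ∀ {i a b}, i ∈ (F a).1 → i ∈ (F b).1 → a = b)
  (huC : ∀ {j a b}, j ∈ (F a).2 → j ∈ (F b).2 → a = b)

include hk hrow hR hC hperm1 huR in
lemma newMat_row (x : Fin v ⊕ Fin θ) :
    (univ.filter (fun y => newMat M F x y = true)).card = k := by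
  rw [card_filter_sum]
  match x with
  | Sum.inr a =>
    have h1 : (univ.filter (fun j : Fin v => newMat M F (Sum.inr a) (Sum.inl j) = true)).card
        = k - 1 := by
      simp only [newMat, decide_eq_true_eq]
      rw [Finset.filter_univ_mem]
      exact hC a
    have h2 : (univ.filter (fun b : Fin θ => newMat M F (Sum.inr a) (Sum.inr b) = true)).card
        = 1 := by
      simp only [newMat, decide_eq_true_eq]
      exact card_filter_unique ⟨a, rfl, fun b hb => hb.symm⟩
    rw [h1, h2]; omega
  | Sum.inl i =>
    by_cases hex : ∃ a, i ∈ (F a).1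
    · obtain ⟨a₀, ha₀⟩ := hex
      have h2 : (univ.filter (fun b : Fin θ => newMat M F (Sum.inl i) (Sum.inr b) = true)).card
          = 1 := by
        simp only [newMat, decide_eq_true_eq]
        exact card_filter_unique ⟨a₀, ha₀, fun b hb => huR hb ha₀⟩
      have hiff : ∀ j : Fin v, (∃ a, i ∈ (F a).1 ∧ j ∈ (F a).2) ↔ j ∈ (F a₀).2 := by
        intro j
        constructor
        · rintro ⟨a, hia, hja⟩; rwa [huR hia ha₀] at hja
        · intro hj; exact ⟨a₀, ha₀, hj⟩
      have h1 : (univ.filter (fun j : Fin v => newMat M F (Sum.inl i) (Sum.inl j) = true)).card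
          = k - 1 := by
        have e1 : (univ.filter (fun j : Fin v => newMat M F (Sum.inl i) (Sum.inl j) = true))
            = (univ.filter (fun j => M i j = true)).filter (fun j => j ∉ (F a₀).2) := by
          ext j
          simp only [newMat, mem_filter, Bool.and_eq_true, Bool.not_eq_true',
            decide_eq_false_iff_not, mem_univ, true_and, hiff j] <;> tauto
        have e2 : ((univ.filter (fun j => M i j = true)).filter (fun j => j ∈ (F a₀).2)).card
            = 1 := by
          rw [Finset.filter_filter]
          have := hperm1 a₀ i ha₀
          refine card_filter_unique ?_
          obtain ⟨j, hj, hu⟩ := this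
          exact ⟨j, ⟨hj.2, hj.1⟩, fun y hy => hu y ⟨hy.2, hy.1⟩⟩
        have e3 := Finset.card_filter_add_card_filter_not
          (s := univ.filter (fun j => M i j = true)) (p := fun j => j ∈ (F a₀).2)
        rw [hrow i, e2] at e3
        rw [e1]
        omega
      rw [h1, h2]; omega
    · have h2 : (univ.filter (fun b : Fin θ => newMat M F (Sum.inl i) (Sum.inr b) = true)).card
          = 0 := by
        rw [Finset.card_eq_zero, Finset.filter_eq_empty_iff]
        intro b _
        simp only [newMat, decide_eq_true_eq]
        exact fun hb => hex ⟨b, hb⟩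
      have h1 : (univ.filter (fun j : Fin v => newMat M F (Sum.inl i) (Sum.inl j) = true))
          = univ.filter (fun j => M i j = true) := by
        ext j
        simp only [newMat, mem_filter, Bool.and_eq_true, Bool.not_eq_true',
          decide_eq_false_iff_not, mem_univ, true_and]
        constructor
        · exact fun h => h.1
        · intro h
          exact ⟨h, fun ⟨a, hia, _⟩ => hex ⟨a, hia⟩⟩
      rw [h1, hrow i, h2]; omega

include hk hcol hR hC hperm2 huC in
lemma newMat_col (y : Fin v ⊕ Fin θ) :
    (univ.filter (fun x => newMat M F x y = true)).card = k := by
  rw [card_filter_sum]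
  match y with
  | Sum.inr a =>
    have h1 : (univ.filter (fun i : Fin v => newMat M F (Sum.inl i) (Sum.inr a) = true)).card
        = k - 1 := by
      simp only [newMat, decide_eq_true_eq]
      rw [Finset.filter_univ_mem]
      exact hR a
    have h2 : (univ.filter (fun b : Fin θ => newMat M F (Sum.inr b) (Sum.inr a) = true)).card
        = 1 := by
      simp only [newMat, decide_eq_true_eq]
      exact card_filter_unique ⟨a, rfl, fun b hb => hb⟩
    rw [h1, h2]; omega
  | Sum.inl j =>
    by_cases hex : ∃ a, j ∈ (F a).2
    · obtain ⟨a₀, ha₀⟩ := hex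
      have h2 : (univ.filter (fun b : Fin θ => newMat M F (Sum.inr b) (Sum.inl j) = true)).card
          = 1 := by
        simp only [newMat, decide_eq_true_eq]
        exact card_filter_unique ⟨a₀, ha₀, fun b hb => huC hb ha₀⟩
      have hiff : ∀ i : Fin v, (∃ a, i ∈ (F a).1 ∧ j ∈ (F a).2) ↔ i ∈ (F a₀).1 := by
        intro i
        constructor
        · rintro ⟨a, hia, hja⟩; rwa [huC hja ha₀] at hia
        · intro hi; exact ⟨a₀, hi, ha₀⟩
      have h1 : (univ.filter (fun i : Fin v => newMat M F (Sum.inl i) (Sum.inl j) = true)).card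
          = k - 1 := by
        have e1 : (univ.filter (fun i : Fin v => newMat M F (Sum.inl i) (Sum.inl j) = true))
            = (univ.filter (fun i => M i j = true)).filter (fun i => i ∉ (F a₀).1) := by
          ext i
          simp only [newMat, mem_filter, Bool.and_eq_true, Bool.not_eq_true',
            decide_eq_false_iff_not, mem_univ, true_and, hiff i] <;> tauto
        have e2 : ((univ.filter (fun i => M i j = true)).filter (fun i => i ∈ (F a₀).1)).card
            = 1 := by
          rw [Finset.filter_filter]
          obtain ⟨i, hi, hu⟩ := hperm2 a₀ j ha₀
          refine card_filter_unique ⟨i, ⟨hi.2, hi.1⟩, fun y hy => hu y ⟨hy.2, hy.1⟩⟩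
        have e3 := Finset.card_filter_add_card_filter_not
          (s := univ.filter (fun i => M i j = true)) (p := fun i => i ∈ (F a₀).1)
        rw [hcol j, e2] at e3
        rw [e1]
        omega
      rw [h1, h2]; omega
    · have h2 : (univ.filter (fun b : Fin θ => newMat M F (Sum.inr b) (Sum.inl j) = true)).card
          = 0 := by
        rw [Finset.card_eq_zero, Finset.filter_eq_empty_iff]
        intro b _
        simp only [newMat, decide_eq_true_eq]
        exact fun hb => hex ⟨b, hb⟩
      have h1 : (univ.filter (fun i : Fin v => newMat M F (Sum.inl i) (Sum.inl j) = true))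
          = univ.filter (fun i => M i j = true) := by
        ext i
        simp only [newMat, mem_filter, Bool.and_eq_true, Bool.not_eq_true',
          decide_eq_false_iff_not, mem_univ, true_and]
        constructor
        · exact fun h => h.1
        · intro h
          exact ⟨h, fun ⟨a, hia, hja⟩ => hex ⟨a, hja⟩⟩
      rw [h1, hcol j, h2]; omega

include hJ2 hRdis hCdis huR huC in
lemma newMat_J2 : ∀ x x' y y' : Fin v ⊕ Fin θ, x ≠ x' → y ≠ y' →
    ¬(newMat M F x y = true ∧ newMat M F x y' = true ∧
      newMat M F x' y = true ∧ newMat M F x' y' = true) := by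
  -- first handle the case where the second column is "old or anything" via full case split
  have key : ∀ (x x' y y' : Fin v ⊕ Fin θ), x ≠ x' → y ≠ y' →
      newMat M F x y = true → newMat M F x y' = true →
      newMat M F x' y = true → newMat M F x' y' = true → False := by
    intro x x' y y' hxx hyy h1 h2 h3 h4
    -- normalize so that we can argue by cases; do full rcases
    match x, x', y, y' with
    | Sum.inl i, Sum.inl i', Sum.inl j, Sum.inl j' =>
      simp only [newMat, Bool.and_eq_true, Bool.not_eq_true',
        decide_eq_false_iff_not] at h1 h2 h3 h4
      exact hJ2 i i' j j' (fun h => hxx (by rw [h])) (fun h => hyy (by rw [h]))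
        ⟨h1.1, h2.1, h3.1, h4.1⟩
    | Sum.inl i, Sum.inl i', Sum.inl j, Sum.inr a =>
      simp only [newMat, Bool.and_eq_true, Bool.not_eq_true',
        decide_eq_false_iff_not, decide_eq_true_eq] at h1 h2 h3 h4
      exact hRdis a j i h2 i' h4 (fun h => hxx (by rw [h])) ⟨h1.1, h3.1⟩
    | Sum.inl i, Sum.inl i', Sum.inr a, Sum.inl j' =>
      simp only [newMat, Bool.and_eq_true, Bool.not_eq_true',
        decide_eq_false_iff_not, decide_eq_true_eq] at h1 h2 h3 h4
      exact hRdis a j' i h1 i' h3 (fun h => hxx (by rw [h])) ⟨h2.1, h4.1⟩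
    | Sum.inl i, Sum.inl i', Sum.inr a, Sum.inr b =>
      simp only [newMat, decide_eq_true_eq] at h1 h2
      exact hyy (by rw [huR h1 h2])
    | Sum.inl i, Sum.inr a, Sum.inl j, Sum.inl j' =>
      simp only [newMat, Bool.and_eq_true, Bool.not_eq_true',
        decide_eq_false_iff_not, decide_eq_true_eq] at h1 h2 h3 h4
      exact hCdis a i j h3 j' h4 (fun h => hyy (by rw [h])) ⟨h1.1, h2.1⟩
    | Sum.inl i, Sum.inr a, Sum.inl j, Sum.inr b =>
      simp only [newMat, Bool.and_eq_true, Bool.not_eq_true',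
        decide_eq_false_iff_not, decide_eq_true_eq] at h1 h2 h3 h4
      subst h4
      exact h1.2 ⟨a, h2, h3⟩
    | Sum.inl i, Sum.inr a, Sum.inr b, Sum.inl j' =>
      simp only [newMat, Bool.and_eq_true, Bool.not_eq_true',
        decide_eq_false_iff_not, decide_eq_true_eq] at h1 h2 h3 h4
      subst h3
      exact h2.2 ⟨a, h1, h4⟩
    | Sum.inl i, Sum.inr a, Sum.inr b, Sum.inr b' =>
      simp only [newMat, decide_eq_true_eq] at h3 h4
      exact hyy (by rw [← h3, ← h4])
    | Sum.inr a, Sum.inl i', Sum.inl j, Sum.inl j' =>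
      simp only [newMat, Bool.and_eq_true, Bool.not_eq_true',
        decide_eq_false_iff_not, decide_eq_true_eq] at h1 h2 h3 h4
      exact hCdis a i' j h1 j' h2 (fun h => hyy (by rw [h])) ⟨h3.1, h4.1⟩
    | Sum.inr a, Sum.inl i', Sum.inl j, Sum.inr b =>
      simp only [newMat, Bool.and_eq_true, Bool.not_eq_true',
        decide_eq_false_iff_not, decide_eq_true_eq] at h1 h2 h3 h4
      subst h2
      exact h3.2 ⟨a, h4, h1⟩
    | Sum.inr a, Sum.inl i', Sum.inr b, Sum.inl j' =>
      simp only [newMat, Bool.and_eq_true, Bool.not_eq_true',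
        decide_eq_false_iff_not, decide_eq_true_eq] at h1 h2 h3 h4
      subst h1
      exact h4.2 ⟨a, h3, h2⟩
    | Sum.inr a, Sum.inl i', Sum.inr b, Sum.inr b' =>
      simp only [newMat, decide_eq_true_eq] at h1 h2
      exact hyy (by rw [← h1, ← h2])
    | Sum.inr a, Sum.inr a', Sum.inl j, Sum.inl j' =>
      simp only [newMat, decide_eq_true_eq] at h1 h3
      exact hxx (by rw [huC h1 h3])
    | Sum.inr a, Sum.inr a', Sum.inl j, Sum.inr b =>
      simp only [newMat, decide_eq_true_eq] at h2 h4
      exact hxx (by rw [h2, h4])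
    | Sum.inr a, Sum.inr a', Sum.inr b, Sum.inl j' =>
      simp only [newMat, decide_eq_true_eq] at h1 h3
      exact hxx (by rw [h1, h3])
    | Sum.inr a, Sum.inr a', Sum.inr b, Sum.inr b' =>
      simp only [newMat, decide_eq_true_eq] at h1 h3
      exact hxx (by rw [h1, h3])
  intro x x' y y' hxx hyy h
  exact key x x' y y' hxx hyy h.1 h.2.1 h.2.2.1 h.2.2.2

end Main

end Aux

lemma card_filter_equiv {α β : Type*} [Fintype α] [Fintype β] [DecidableEq α] [DecidableEq β]
    (e : α ≃ β) (P : α → Prop) [DecidablePred P] :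
    (univ.filter (fun b => P (e.symm b))).card = (univ.filter P).card := by
  apply Finset.card_bij' (fun b _ => e.symm b) (fun a _ => e a) <;> simp

theorem exists_configuration_add_theta' (v k : ℕ) (hk : 2 ≤ k)
    (M : Matrix (Fin v) (Fin v) Bool)
    (hM : (∀ i, (Finset.univ.filter (fun j => M i j = true)).card = k) ∧
      (∀ j, (Finset.univ.filter (fun i => M i j = true)).card = k) ∧
      ∀ i i' j j', i ≠ i' → j ≠ j' →
        ¬(M i j = true ∧ M i j' = true ∧ M i' j = true ∧ M i' j' = true))
    (θ : ℕ)
    (F : Fin θ → Finset (Fin v) × Finset (Fin v))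
    (hF : ∀ a, ((F a).1.card = k - 1 ∧ (F a).2.card = k - 1 ∧
      (∀ j : Fin v, ∀ i ∈ (F a).1, ∀ i' ∈ (F a).1, i ≠ i' → ¬(M i j = true ∧ M i' j = true)) ∧
      (∀ i : Fin v, ∀ j ∈ (F a).2, ∀ j' ∈ (F a).2, j ≠ j' → ¬(M i j = true ∧ M i j' = true)) ∧
      (∀ i ∈ (F a).1, ∃! j : Fin v, j ∈ (F a).2 ∧ M i j = true) ∧
      (∀ j ∈ (F a).2, ∃! i : Fin v, i ∈ (F a).1 ∧ M i j = true)))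
    (hdisj : ∀ a b, a ≠ b → Disjoint (F a).1 (F b).1 ∧ Disjoint (F a).2 (F b).2) :
    ∃ M' : Matrix (Fin (v + θ)) (Fin (v + θ)) Bool,
      (∀ i, (Finset.univ.filter (fun j => M' i j = true)).card = k) ∧
      (∀ j, (Finset.univ.filter (fun i => M' i j = true)).card = k) ∧
      ∀ i i' j j', i ≠ i' → j ≠ j' →
        ¬(M' i j = true ∧ M' i j' = true ∧ M' i' j = true ∧ M' i' j' = true) := by
  have huR : ∀ {i : Fin v} {a b : Fin θ}, i ∈ (F a).1 → i ∈ (F b).1 → a = b := by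
    intro i a b ha hb
    by_contra hne
    exact (Finset.disjoint_left.mp (hdisj a b hne).1 ha) hb
  have huC : ∀ {j : Fin v} {a b : Fin θ}, j ∈ (F a).2 → j ∈ (F b).2 → a = b := by
    intro j a b ha hb
    by_contra hne
    exact (Finset.disjoint_left.mp (hdisj a b hne).2 ha) hb
  let e : (Fin v ⊕ Fin θ) ≃ Fin (v + θ) := finSumFinEquiv
  refine ⟨fun x y => newMat M F (e.symm x) (e.symm y), ?_, ?_, ?_⟩
  · intro x
    rw [card_filter_equiv e (fun y => newMat M F (e.symm x) y = true)]
    exact newMat_row hk M F hM.1 (fun a => (hF a).1) (fun a => (hF a).2.1)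
      (fun a => (hF a).2.2.2.2.1) huR (e.symm x)
  · intro y
    rw [card_filter_equiv e (fun x => newMat M F x (e.symm y) = true)]
    exact newMat_col hk M F hM.2.1 (fun a => (hF a).1) (fun a => (hF a).2.1)
      (fun a => (hF a).2.2.2.2.2) huC (e.symm y)
  · intro i i' j j' hii hjj
    exact newMat_J2 M F hM.2.2 (fun a => (hF a).2.2.1) (fun a => (hF a).2.2.2.1) huR huC
      (e.symm i) (e.symm i') (e.symm j) (e.symm j')
      (fun h => hii (by simpa using congrArg e h)) (fun h => hjj (by simpa using congrArg e h))


/-- If an incidence matrix of a symmetric configuration `v_k` admits `θ ≥ 1` pairwise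
disjoint E-aggregates, then there exists an incidence matrix of a symmetric
configuration `(v+θ)_k`. -/
theorem exists_configuration_add_theta (v k : ℕ) (hk : 2 ≤ k)
    (M : Matrix (Fin v) (Fin v) Bool) (hM : IsIncidenceMatrix v k M)
    (θ : ℕ) (hθ : 1 ≤ θ)
    (F : Fin θ → Finset (Fin v) × Finset (Fin v))
    (hF : ∀ a, IsEAggregate v k M (F a).1 (F a).2)
    (hdisj : ∀ a b, a ≠ b → Disjoint (F a).1 (F b).1 ∧ Disjoint (F a).2 (F b).2) :
    ∃ M' : Matrix (Fin (v + θ)) (Fin (v + θ)) Bool,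
      IsIncidenceMatrix (v + θ) k M' := by
  refine exists_configuration_add_theta' v k hk M hM θ F (fun a => hF a) hdisj
end

section
/- Let k ≥ 2 and let M be an incidence matrix of a symmetric configuration v_k. If M contains θ pairwise disjoint E-aggregates where θ ≥ k − 1, then there exists an incidence matrix of a symmetric configuration (v+θ+1)_k (after θ applications of the extension procedure, any k−1 of the new rows together with any k−1 of the new columns form an E-aggregate, allowing one further extension). -/
open Finset

lemma filter_sum_card {α β : Type*} [Fintype α] [Fintype β]
    (p : α ⊕ β → Prop) [DecidablePred p] :
    (Finset.univ.filter p).card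
      = (Finset.univ.filter fun a => p (Sum.inl a)).card
        + (Finset.univ.filter fun b => p (Sum.inr b)).card := by
  classical
  have h : (Finset.univ.filter p)
      = (Finset.univ.filter fun a => p (Sum.inl a)).disjSum
          (Finset.univ.filter fun b => p (Sum.inr b)) := by
    ext x
    cases x <;> simp
  rw [h, Finset.card_disjSum]

lemma card_filter_fin_lt {θ : ℕ} {m : ℕ} (h : m ≤ θ) :
    ((Finset.univ : Finset (Fin θ)).filter fun b : Fin θ => (b : ℕ) < m).card = m := by
  have hmap : ((Finset.univ : Finset (Fin θ)).filter fun b : Fin θ => (b : ℕ) < m)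
      = (Finset.univ : Finset (Fin m)).map (Fin.castLEEmb h) := by
    ext b
    simp only [mem_filter, mem_univ, true_and, Finset.mem_map, Fin.castLEEmb_apply]
    constructor
    · intro hb
      exact ⟨⟨(b : ℕ), hb⟩, rfl⟩
    · rintro ⟨c, rfl⟩
      exact c.2
  rw [hmap, Finset.card_map, Finset.card_univ, Fintype.card_fin]

/-- The one-shot extension matrix: old block with the permutation submatrices of the
E-aggregates deleted, `θ` new rows/columns (one per E-aggregate), and one final
new row/column attached to the first `k-1` of the new ones. -/
def extMat {v θ : ℕ} (k : ℕ) (M : Matrix (Fin v) (Fin v) Bool)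
    (R C : Fin θ → Finset (Fin v)) :
    Matrix ((Fin v ⊕ Fin θ) ⊕ Fin 1) ((Fin v ⊕ Fin θ) ⊕ Fin 1) Bool :=
  fun x y =>
    match x, y with
    | .inl (.inl i), .inl (.inl j) => M i j && !(decide (∃ a, i ∈ R a ∧ j ∈ C a))
    | .inl (.inl i), .inl (.inr b) => decide (i ∈ R b)
    | .inl (.inl _), .inr _ => false
    | .inl (.inr a), .inl (.inl j) => decide (j ∈ C a)
    | .inl (.inr a), .inl (.inr b) => decide (a = b ∧ k - 1 ≤ (a : ℕ))
    | .inl (.inr a), .inr _ => decide ((a : ℕ) < k - 1)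
    | .inr _, .inl (.inl _) => false
    | .inr _, .inl (.inr b) => decide ((b : ℕ) < k - 1)
    | .inr _, .inr _ => true

section extMatLemmas

variable {v θ k : ℕ} (M : Matrix (Fin v) (Fin v) Bool) (R C : Fin θ → Finset (Fin v))

@[simp] lemma extMat_oo (i j : Fin v) :
    extMat k M R C (.inl (.inl i)) (.inl (.inl j))
      = (M i j && !(decide (∃ a, i ∈ R a ∧ j ∈ C a))) := rfl

@[simp] lemma extMat_on (i : Fin v) (b : Fin θ) :
    extMat k M R C (.inl (.inl i)) (.inl (.inr b)) = decide (i ∈ R b) := rfl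

@[simp] lemma extMat_ol (i : Fin v) (u : Fin 1) :
    extMat k M R C (.inl (.inl i)) (.inr u) = false := rfl

@[simp] lemma extMat_no (a : Fin θ) (j : Fin v) :
    extMat k M R C (.inl (.inr a)) (.inl (.inl j)) = decide (j ∈ C a) := rfl

@[simp] lemma extMat_nn (a b : Fin θ) :
    extMat k M R C (.inl (.inr a)) (.inl (.inr b))
      = decide (a = b ∧ k - 1 ≤ (a : ℕ)) := rfl

@[simp] lemma extMat_nl (a : Fin θ) (u : Fin 1) :
    extMat k M R C (.inl (.inr a)) (.inr u) = decide ((a : ℕ) < k - 1) := rfl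

@[simp] lemma extMat_lo (u : Fin 1) (j : Fin v) :
    extMat k M R C (.inr u) (.inl (.inl j)) = false := rfl

@[simp] lemma extMat_ln (u : Fin 1) (b : Fin θ) :
    extMat k M R C (.inr u) (.inl (.inr b)) = decide ((b : ℕ) < k - 1) := rfl

@[simp] lemma extMat_ll (u w : Fin 1) :
    extMat k M R C (.inr u) (.inr w) = true := rfl

end extMatLemmas

lemma extMat_row_card {v θ k : ℕ} (hk : 2 ≤ k) (hθ : k - 1 ≤ θ)
    (M : Matrix (Fin v) (Fin v) Bool) (R C : Fin θ → Finset (Fin v))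
    (hrow : ∀ i, (Finset.univ.filter (fun j => M i j = true)).card = k)
    (hRd : ∀ {a b : Fin θ} {i : Fin v}, i ∈ R a → i ∈ R b → a = b)
    (hCcard : ∀ a, (C a).card = k - 1)
    (hEx : ∀ a, ∀ i ∈ R a, ∃! j : Fin v, j ∈ C a ∧ M i j = true)
    (x : (Fin v ⊕ Fin θ) ⊕ Fin 1) :
    (Finset.univ.filter fun y => extMat k M R C x y = true).card = k := by
  classical
  rcases x with (i | a) | u
  · -- old row i
    have key := filter_sum_card
      (fun y : (Fin v ⊕ Fin θ) ⊕ Fin 1 =>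
        extMat k M R C (.inl (.inl i)) y = true)
    have key2 := filter_sum_card
      (fun z : Fin v ⊕ Fin θ =>
        extMat k M R C (.inl (.inl i)) (Sum.inl z) = true)
    have h3 : (Finset.univ.filter fun u : Fin 1 =>
        extMat k M R C (.inl (.inl i)) (Sum.inr u) = true).card = 0 := by
      simp
    by_cases hi : ∃ a, i ∈ R a
    · obtain ⟨a, ha⟩ := hi
      have h2 : (Finset.univ.filter fun b : Fin θ =>
          extMat k M R C (.inl (.inl i)) (Sum.inl (Sum.inr b)) = true).card = 1 := by
        have : (Finset.univ.filter fun b : Fin θ =>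
            extMat k M R C (.inl (.inl i)) (Sum.inl (Sum.inr b)) = true) = {a} := by
          ext b
          simp only [extMat_on, decide_eq_true_eq, mem_filter, mem_univ, true_and,
            mem_singleton]
          exact ⟨fun hb => hRd hb ha, fun hb => hb ▸ ha⟩
        rw [this, Finset.card_singleton]
      have hone : (Finset.univ.filter fun j : Fin v =>
          j ∈ C a ∧ M i j = true).card = 1 := by
        obtain ⟨j0, hj0, hun⟩ := hEx a i ha
        rw [Finset.card_eq_one]
        refine ⟨j0, ?_⟩
        ext j
        simp only [mem_filter, mem_univ, true_and, mem_singleton]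
        exact ⟨fun hj => hun j hj, fun hj => hj ▸ hj0⟩
      have hsub : (Finset.univ.filter fun j : Fin v => j ∈ C a ∧ M i j = true)
          ⊆ (Finset.univ.filter fun j : Fin v => M i j = true) := by
        intro j hj
        simp only [mem_filter, mem_univ, true_and] at hj ⊢
        exact hj.2
      have h1 : (Finset.univ.filter fun j : Fin v =>
          extMat k M R C (.inl (.inl i)) (Sum.inl (Sum.inl j)) = true).card = k - 1 := by
        have hset : (Finset.univ.filter fun j : Fin v =>
            extMat k M R C (.inl (.inl i)) (Sum.inl (Sum.inl j)) = true)
            = (Finset.univ.filter fun j : Fin v => M i j = true)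
              \ (Finset.univ.filter fun j : Fin v => j ∈ C a ∧ M i j = true) := by
          ext j
          simp only [extMat_oo, Bool.and_eq_true, Bool.not_eq_true',
            decide_eq_false_iff_not, mem_filter, mem_univ, true_and, mem_sdiff]
          constructor
          · rintro ⟨hm, hno⟩
            exact ⟨hm, fun hc => hno ⟨a, ha, hc.1⟩⟩
          · rintro ⟨hm, hno⟩
            refine ⟨hm, fun hex => ?_⟩
            obtain ⟨b, hb, hc⟩ := hex
            exact hno ⟨(hRd hb ha) ▸ hc, hm⟩
        rw [hset, Finset.card_sdiff_of_subset hsub, hone, hrow i]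
      omega
    · push_neg at hi
      have h2 : (Finset.univ.filter fun b : Fin θ =>
          extMat k M R C (.inl (.inl i)) (Sum.inl (Sum.inr b)) = true).card = 0 := by
        rw [Finset.card_eq_zero]
        ext b
        simp only [extMat_on, decide_eq_true_eq, mem_filter, mem_univ, true_and,
          Finset.notMem_empty, iff_false]
        exact hi b
      have h1 : (Finset.univ.filter fun j : Fin v =>
          extMat k M R C (.inl (.inl i)) (Sum.inl (Sum.inl j)) = true).card = k := by
        have hset : (Finset.univ.filter fun j : Fin v =>
            extMat k M R C (.inl (.inl i)) (Sum.inl (Sum.inl j)) = true)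
            = (Finset.univ.filter fun j : Fin v => M i j = true) := by
          ext j
          simp only [extMat_oo, Bool.and_eq_true, Bool.not_eq_true',
            decide_eq_false_iff_not, mem_filter, mem_univ, true_and]
          constructor
          · rintro ⟨hm, _⟩
            exact hm
          · intro hm
            refine ⟨hm, fun hex => ?_⟩
            obtain ⟨b, hb, -⟩ := hex
            exact hi b hb
        rw [hset, hrow i]
      omega
  · -- new row a
    have key := filter_sum_card
      (fun y : (Fin v ⊕ Fin θ) ⊕ Fin 1 =>
        extMat k M R C (.inl (.inr a)) y = true)
    have key2 := filter_sum_card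
      (fun z : Fin v ⊕ Fin θ =>
        extMat k M R C (.inl (.inr a)) (Sum.inl z) = true)
    have h1 : (Finset.univ.filter fun j : Fin v =>
        extMat k M R C (.inl (.inr a)) (Sum.inl (Sum.inl j)) = true).card = k - 1 := by
      have : (Finset.univ.filter fun j : Fin v =>
          extMat k M R C (.inl (.inr a)) (Sum.inl (Sum.inl j)) = true) = C a := by
        ext j
        simp
      rw [this, hCcard]
    by_cases hka : k - 1 ≤ (a : ℕ)
    · have h2 : (Finset.univ.filter fun b : Fin θ =>
          extMat k M R C (.inl (.inr a)) (Sum.inl (Sum.inr b)) = true).card = 1 := by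
        have : (Finset.univ.filter fun b : Fin θ =>
            extMat k M R C (.inl (.inr a)) (Sum.inl (Sum.inr b)) = true) = {a} := by
          ext b
          simp only [extMat_nn, decide_eq_true_eq, mem_filter, mem_univ, true_and,
            mem_singleton]
          exact ⟨fun hb => hb.1.symm, fun hb => ⟨hb.symm, hka⟩⟩
        rw [this, Finset.card_singleton]
      have h3 : (Finset.univ.filter fun u : Fin 1 =>
          extMat k M R C (.inl (.inr a)) (Sum.inr u) = true).card = 0 := by
        rw [Finset.card_eq_zero]
        ext u
        simp only [extMat_nl, decide_eq_true_eq, mem_filter, mem_univ, true_and,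
          Finset.notMem_empty, iff_false]
        omega
      omega
    · have h2 : (Finset.univ.filter fun b : Fin θ =>
          extMat k M R C (.inl (.inr a)) (Sum.inl (Sum.inr b)) = true).card = 0 := by
        rw [Finset.card_eq_zero]
        ext b
        simp only [extMat_nn, decide_eq_true_eq, mem_filter, mem_univ, true_and,
          Finset.notMem_empty, iff_false]
        exact fun hb => hka hb.2
      have h3 : (Finset.univ.filter fun u : Fin 1 =>
          extMat k M R C (.inl (.inr a)) (Sum.inr u) = true).card = 1 := by
        have : (Finset.univ.filter fun u : Fin 1 =>
            extMat k M R C (.inl (.inr a)) (Sum.inr u) = true) = Finset.univ := by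
          ext u
          simp only [extMat_nl, decide_eq_true_eq, mem_filter, mem_univ, true_and,
            iff_true]
          omega
        rw [this]
        simp
      omega
  · -- last row
    have key := filter_sum_card
      (fun y : (Fin v ⊕ Fin θ) ⊕ Fin 1 =>
        extMat k M R C (.inr u) y = true)
    have key2 := filter_sum_card
      (fun z : Fin v ⊕ Fin θ =>
        extMat k M R C (.inr u) (Sum.inl z) = true)
    have h1 : (Finset.univ.filter fun j : Fin v =>
        extMat k M R C (.inr u) (Sum.inl (Sum.inl j)) = true).card = 0 := by
      simp
    have h2 : (Finset.univ.filter fun b : Fin θ =>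
        extMat k M R C (.inr u) (Sum.inl (Sum.inr b)) = true).card = k - 1 := by
      have : (Finset.univ.filter fun b : Fin θ =>
          extMat k M R C (.inr u) (Sum.inl (Sum.inr b)) = true)
          = (Finset.univ.filter fun b : Fin θ => (b : ℕ) < k - 1) := by
        ext b
        simp
      rw [this, card_filter_fin_lt hθ]
    have h3 : (Finset.univ.filter fun w : Fin 1 =>
        extMat k M R C (.inr u) (Sum.inr w) = true).card = 1 := by
      simp
    omega

/-- If an incidence matrix of a symmetric configuration `v_k` admits `θ ≥ k-1` pairwise
disjoint E-aggregates, then there exists an incidence matrix of a symmetric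
configuration `(v+θ+1)_k`. -/
theorem exists_configuration_add_theta_succ (v k : ℕ) (hk : 2 ≤ k)
    (M : Matrix (Fin v) (Fin v) Bool) (hM : IsIncidenceMatrix v k M)
    (θ : ℕ) (hθ : k - 1 ≤ θ)
    (F : Fin θ → Finset (Fin v) × Finset (Fin v))
    (hF : ∀ a, IsEAggregate v k M (F a).1 (F a).2)
    (hdisj : ∀ a b, a ≠ b → Disjoint (F a).1 (F b).1 ∧ Disjoint (F a).2 (F b).2) :
    ∃ M' : Matrix (Fin (v + θ + 1)) (Fin (v + θ + 1)) Bool,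
      IsIncidenceMatrix (v + θ + 1) k M' := by
  classical
  obtain ⟨hrow, hcol, hJ⟩ := hM
  have hRd : ∀ {a b : Fin θ} {i : Fin v}, i ∈ (F a).1 → i ∈ (F b).1 → a = b := by
    intro a b i ha hb
    by_contra hne
    exact (Finset.disjoint_left.mp (hdisj a b hne).1 ha) hb
  have hCd : ∀ {a b : Fin θ} {j : Fin v}, j ∈ (F a).2 → j ∈ (F b).2 → a = b := by
    intro a b j ha hb
    by_contra hne
    exact (Finset.disjoint_left.mp (hdisj a b hne).2 ha) hb
  set R : Fin θ → Finset (Fin v) := fun a => (F a).1 with hRdef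
  set C : Fin θ → Finset (Fin v) := fun a => (F a).2 with hCdef
  -- row sums of the extension matrix
  have hN : ∀ x, (Finset.univ.filter fun y => extMat k M R C x y = true).card = k :=
    extMat_row_card hk hθ M R C hrow (fun ha hb => hRd ha hb)
      (fun a => (hF a).2.1) (fun a => (hF a).2.2.2.2.1)
  -- column sums via transpose symmetry
  have hTrans : ∀ x y, extMat k M R C x y = extMat k M.transpose C R y x := by
    rintro ((i | a) | u) ((j | b) | w) <;>
      simp only [extMat_oo, extMat_on, extMat_ol, extMat_no, extMat_nn, extMat_nl,
        extMat_lo, extMat_ln, extMat_ll, Matrix.transpose_apply]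
    · have hiff : (∃ a, i ∈ R a ∧ j ∈ C a) ↔ (∃ a, j ∈ C a ∧ i ∈ R a) :=
        ⟨fun ⟨a, h1, h2⟩ => ⟨a, h2, h1⟩, fun ⟨a, h1, h2⟩ => ⟨a, h2, h1⟩⟩
      rw [show decide (∃ a, i ∈ R a ∧ j ∈ C a) = decide (∃ a, j ∈ C a ∧ i ∈ R a) from
        decide_eq_decide.mpr hiff]
    · have hiff : (a = b ∧ k - 1 ≤ (a : ℕ)) ↔ (b = a ∧ k - 1 ≤ (b : ℕ)) :=
        ⟨fun ⟨h1, h2⟩ => ⟨h1.symm, h1 ▸ h2⟩, fun ⟨h1, h2⟩ => ⟨h1.symm, h1 ▸ h2⟩⟩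
      rw [show decide (a = b ∧ k - 1 ≤ (a : ℕ)) = decide (b = a ∧ k - 1 ≤ (b : ℕ)) from
        decide_eq_decide.mpr hiff]
  have hNc : ∀ y, (Finset.univ.filter fun x => extMat k M R C x y = true).card = k := by
    intro y
    have hTc := extMat_row_card hk hθ M.transpose C R hcol (fun ha hb => hCd ha hb)
      (fun a => (hF a).1) (fun a => (hF a).2.2.2.2.2) y
    have : (Finset.univ.filter fun x => extMat k M R C x y = true)
        = (Finset.univ.filter fun x => extMat k M.transpose C R y x = true) := by
      ext x
      simp only [Finset.mem_filter, Finset.mem_univ, true_and]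
      rw [hTrans]
    rw [this, hTc]
  -- J₂-freeness of the extension matrix
  have hJN : ∀ x x' y y', x ≠ x' → y ≠ y' →
      ¬(extMat k M R C x y = true ∧ extMat k M R C x y' = true ∧
        extMat k M R C x' y = true ∧ extMat k M R C x' y' = true) := by
    rintro ((i | a) | u) ((i' | a') | u') ((j | b) | w) ((j' | b') | w') hx hy h <;>
    · try simp only [ne_eq, Sum.inl.injEq, Sum.inr.injEq] at hx
      try simp only [ne_eq, Sum.inl.injEq, Sum.inr.injEq] at hy
      simp only [extMat_oo, extMat_on, extMat_ol, extMat_no, extMat_nn, extMat_nl,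
        extMat_lo, extMat_ln, extMat_ll, Bool.and_eq_true, Bool.not_eq_true',
        decide_eq_true_eq, decide_eq_false_iff_not, not_exists, not_and,
        Bool.false_eq_true, false_and, and_false, and_true] at h
      all_goals first
      | exact hx (Subsingleton.elim _ _)
      | exact hy (Subsingleton.elim _ _)
      | exact hx (congrArg _ (Subsingleton.elim _ _))
      | exact hy (congrArg _ (Subsingleton.elim _ _))
      | omega
      | exact absurd h.2.1 (not_lt.mpr h.1.2)
      | exact absurd h.1 (not_lt.mpr h.2.1.2)
      | exact absurd h.2.1 (not_lt.mpr h.2.2.2)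
      | obtain ⟨h1, h2, h3, h4⟩ := h
        first
        | exact hJ _ _ _ _ hx hy ⟨h1.1, h2.1, h3.1, h4.1⟩
        | exact (hF _).2.2.1 _ _ h2 _ h4 hx ⟨h1.1, h3.1⟩
        | exact (hF _).2.2.1 _ _ h1 _ h3 hx ⟨h2.1, h4.1⟩
        | exact (hF _).2.2.2.1 _ _ h3 _ h4 hy ⟨h1.1, h2.1⟩
        | exact (hF _).2.2.2.1 _ _ h1 _ h2 hy ⟨h3.1, h4.1⟩
        | exact hy (hRd h1 h2)
        | exact hy (hRd h3 h4)
        | exact hx (hCd h1 h3)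
        | exact hx (hCd h2 h4)
        | exact h1.2 _ h2 (h4.1 ▸ h3)
        | exact h2.2 _ h1 (h3.1 ▸ h4)
        | exact h3.2 _ h4 (h2.1 ▸ h1)
        | exact h4.2 _ h3 (h1.1 ▸ h2)
        | exact hy (h1.1.symm.trans h2.1)
        | exact hy (h3.1.symm.trans h4.1)
        | exact absurd h2 (not_lt.mpr h1.2)
        | exact absurd h1 (not_lt.mpr h2.2)
        | exact absurd h4 (not_lt.mpr h3.2)
        | exact absurd h3 (not_lt.mpr h4.2)
  -- transport along the equivalence with `Fin (v + θ + 1)`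
  let e : ((Fin v ⊕ Fin θ) ⊕ Fin 1) ≃ Fin (v + θ + 1) :=
    (Equiv.sumCongr finSumFinEquiv (Equiv.refl (Fin 1))).trans finSumFinEquiv
  refine ⟨fun i j => extMat k M R C (e.symm i) (e.symm j), ?_, ?_, ?_⟩
  · intro i
    exact (Finset.card_equiv e.symm fun j => by simp).trans (hN (e.symm i))
  · intro j
    exact (Finset.card_equiv e.symm fun i => by simp).trans (hNc (e.symm j))
  · intro i i' j j' hi hj
    exact hJN _ _ _ _ (e.symm.injective.ne hi) (e.symm.injective.ne hj)
end

section
/- Let v = t·d, let A ⊆ {0,1,…,v−1} be a (v,k) modular Golomb ruler, and let σ_t be the permutation of {0,1,…,v−1} with σ_t(a·d+b) = b·t+a for 0 ≤ a ≤ t−1, 0 ≤ b ≤ d−1. Then for all 0 ≤ i, j ≤ v−d−1, the (i, j) entry of A_{σ_t} equals its (i+d, j+d) entry; hence A_{σ_t} is a block double-circulant incidence matrix of a symmetric configuration v_k: it is a t×t array of circulant d×d blocks in which the block in block-position (l, m) depends only on (m − l) mod t up to the cyclic row shift, and the weight of the block in position (l, m) depends only on (m − l) mod t. -/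
/-- A `(v,k)` modular Golomb ruler, given as a `k`-element set of integers in
`{0,…,v-1}` whose differences over ordered pairs of distinct elements are pairwise
distinct and nonzero modulo `v`. -/
def IsModularGolombRulerNat (v k : ℕ) (A : Finset ℕ) : Prop :=
  A.card = k ∧ (∀ a ∈ A, a < v) ∧
  ∀ a ∈ A, ∀ b ∈ A, ∀ c ∈ A, ∀ d ∈ A, a ≠ b → c ≠ d →
    ((a : ZMod v) - (b : ZMod v) = (c : ZMod v) - (d : ZMod v)) → a = c ∧ b = d

/-- The permutation `σ_t` of `{0,…,v-1}` (with `v = t·d`) defined by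
`σ_t(a·d + b) = b·t + a` for `0 ≤ a ≤ t-1`, `0 ≤ b ≤ d-1`; here `a = x / d`,
`b = x % d`. -/
def sigmaT (t d x : ℕ) : ℕ := x % d * t + x / d

/-!
Index the entries by differences in `ZMod v`: entry `(i, j)` of `A_{σ_t}` is `σ_t j - σ_t i ∈ A`.
Since `σ_t (x + d) = σ_t x + 1`, shifting both indices by `d` leaves this difference unchanged.
In block `(l, m)` the difference is `(j - i)·t + (m - l)`, which depends on `j - i` only modulo
`d` because `d·t = 0`; and the weight of the block counts the elements of `A` in the coset
`(m - l) + ⟨t⟩`, which depends only on `m - l` modulo `t`. Since `σ_t` is a bijection, each row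
and column meets `A` in `k` places, and a `2 × 2` all-ones submatrix would give two different
representations of one difference by elements of `A`.
-/

open Finset

theorem ZMod.val_natCast_sub {v : ℕ} [NeZero v] (a : ℕ) {b : ℕ} (hb : b ≤ v) :
    ((a : ZMod v) - b).val = (a + v - b) % v := by
  rw [← ZMod.val_natCast, Nat.cast_sub (by omega), Nat.cast_add, ZMod.natCast_self, add_zero]

theorem Nat.cast_mod_mul_of_cast_mul_eq_zero {R : Type*} [CommRing R] {d : ℕ} {t : R}
    (h : (d : R) * t = 0) (n : ℕ) : ((n % d : ℕ) : R) * t = n * t := by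
  have hn := congrArg (Nat.cast : ℕ → R) (Nat.div_add_mod n d)
  push_cast at hn
  linear_combination t * hn - ((n / d : ℕ) : R) * h

theorem ZMod.natCast_mul_natCast_self (t d : ℕ) : (d : ZMod (t * d)) * t = 0 := by
  rw [← Nat.cast_mul, mul_comm, ZMod.natCast_self]

namespace IsModularGolombRulerNat

variable {v k : ℕ} {A : Finset ℕ}

theorem card_filter_val_mem [NeZero v] (hA : IsModularGolombRulerNat v k A) :
    #{x : ZMod v | x.val ∈ A} = k := by
  obtain ⟨hcard, hlt, -⟩ := hA
  rw [← hcard]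
  refine card_nbij' ZMod.val (Nat.cast : ℕ → ZMod v) ?_ ?_ ?_ ?_
  · intro x hx
    simpa using hx
  · intro a ha
    simpa [ZMod.val_cast_of_lt (hlt a ha)] using ha
  · intro x _
    exact ZMod.natCast_zmod_val x
  · intro a ha
    exact ZMod.val_cast_of_lt (hlt a ha)

theorem eq_of_sub_eq_sub [NeZero v] (hA : IsModularGolombRulerNat v k A) {x y z w : ZMod v}
    (hx : x.val ∈ A) (hy : y.val ∈ A) (hz : z.val ∈ A) (hw : w.val ∈ A)
    (hxy : x ≠ y) (hzw : z ≠ w) (h : x - y = z - w) : x = z ∧ y = w := by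
  have := hA.2.2 _ hx _ hy _ hz _ hw (ZMod.val_injective v |>.ne hxy)
    (ZMod.val_injective v |>.ne hzw) (by simpa only [ZMod.natCast_zmod_val] using h)
  exact ⟨ZMod.val_injective v this.1, ZMod.val_injective v this.2⟩

theorem isIncidenceMatrix_of_bijective [NeZero v] (hA : IsModularGolombRulerNat v k A)
    {f : Fin v → ZMod v} (hf : f.Bijective) :
    IsIncidenceMatrix v k (fun i j => decide ((f j - f i).val ∈ A)) := by
  refine ⟨fun i => ?_, fun j => ?_, fun i i' j j' hii' hjj' h => ?_⟩
  · rw [← hA.card_filter_val_mem]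
    exact card_equiv ((Equiv.ofBijective f hf).trans (Equiv.subRight (f i))) (by simp)
  · rw [← hA.card_filter_val_mem]
    exact card_equiv ((Equiv.ofBijective f hf).trans (Equiv.subLeft (f j))) (by simp)
  · simp only [decide_eq_true_eq] at h
    obtain ⟨hij, hij', hi'j, hi'j'⟩ := h
    have hne : ∀ x, x - f i ≠ x - f i' := fun x he => hii' (hf.1 (sub_right_injective he))
    obtain ⟨hjj'_eq, -⟩ := hA.eq_of_sub_eq_sub hij hi'j hij' hi'j' (hne _) (hne _) (by ring)
    exact hjj' (hf.1 (sub_left_injective hjj'_eq))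

end IsModularGolombRulerNat

section Permutation

variable {t d : ℕ}

theorem sigmaT_add_d (hd : 0 < d) (x : ℕ) : sigmaT t d (x + d) = sigmaT t d x + 1 := by
  rw [sigmaT, sigmaT, Nat.add_mod_right, Nat.add_div_right _ hd, add_assoc]

theorem sigmaT_mul_add (hd : 0 < d) (m : ℕ) {j : ℕ} (hj : j < d) :
    sigmaT t d (m * d + j) = j * t + m := by
  rw [sigmaT, mul_comm m d, Nat.mul_add_mod, Nat.mul_add_div hd, Nat.mod_eq_of_lt hj,
    Nat.div_eq_of_lt hj, add_zero]

theorem sigmaT_lt (hd : 0 < d) {x : ℕ} (hx : x < t * d) : sigmaT t d x < t * d := by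
  have hq : x / d < t := Nat.div_lt_of_lt_mul (by rwa [mul_comm])
  have hr : x % d + 1 ≤ d := Nat.mod_lt x hd
  calc sigmaT t d x < (x % d + 1) * t := by rw [sigmaT]; nlinarith
    _ ≤ t * d := by rw [mul_comm t]; exact Nat.mul_le_mul_right t hr

theorem sigmaT_mod {x : ℕ} (hx : x < t * d) : sigmaT t d x % t = x / d := by
  rw [sigmaT, mul_comm, Nat.mul_add_mod,
    Nat.mod_eq_of_lt (Nat.div_lt_of_lt_mul (by rwa [mul_comm]))]

theorem sigmaT_div (ht : 0 < t) {x : ℕ} (hx : x < t * d) : sigmaT t d x / t = x % d := by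
  rw [sigmaT, mul_comm, Nat.mul_add_div ht,
    Nat.div_eq_of_lt (Nat.div_lt_of_lt_mul (by rwa [mul_comm])), add_zero]

theorem sigmaT_injOn (ht : 0 < t) : Set.InjOn (sigmaT t d) (Set.Iio (t * d)) := by
  intro x hx y hy h
  rw [← Nat.div_add_mod x d, ← Nat.div_add_mod y d, ← sigmaT_mod hx, ← sigmaT_div ht hx,
    ← sigmaT_mod hy, ← sigmaT_div ht hy, h]

theorem bijective_natCast_sigmaT (ht : 0 < t) (hd : 0 < d) :
    (fun x : Fin (t * d) => (sigmaT t d x : ZMod (t * d))).Bijective := by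
  have : NeZero (t * d) := ⟨(Nat.mul_pos ht hd).ne'⟩
  refine (Fintype.bijective_iff_injective_and_card _).mpr ⟨fun x y h => ?_, by simp⟩
  have hσ := (ZMod.natCast_eq_natCast_iff' _ _ _).mp h
  rw [Nat.mod_eq_of_lt (sigmaT_lt hd x.isLt), Nat.mod_eq_of_lt (sigmaT_lt hd y.isLt)] at hσ
  exact Fin.ext (sigmaT_injOn ht x.isLt y.isLt hσ)

end Permutation

section BlockWeight

variable {t d : ℕ}

/-- Row `l·d` of `A_{σ_t}` has entry `j·t + (m - l) ∈ A` in column `m·d + j`, so the weight of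
block `(l, m)` is `blockWeight t d A (m - l)`. -/
def blockWeight (t d : ℕ) (A : Finset ℕ) (x : ZMod (t * d)) : ℕ :=
  #{j ∈ range d | (((j : ℕ) : ZMod (t * d)) * t + x).val ∈ A}

theorem blockWeight_add_self (A : Finset ℕ) (x : ZMod (t * d)) :
    blockWeight t d A (x + t) = blockWeight t d A x := by
  have hdt := ZMod.natCast_mul_natCast_self t d
  refine card_nbij' (fun j => (j + 1) % d) (fun j => (j + (d - 1)) % d) ?_ ?_ ?_ ?_
  · intro j hj
    simp only [coe_filter, mem_range, Set.mem_ofPred_eq] at hj ⊢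
    refine ⟨Nat.mod_lt _ (by omega), ?_⟩
    rw [Nat.cast_mod_mul_of_cast_mul_eq_zero hdt]
    convert hj.2 using 2
    push_cast
    ring
  · intro j hj
    simp only [coe_filter, mem_range, Set.mem_ofPred_eq] at hj ⊢
    refine ⟨Nat.mod_lt _ (by omega), ?_⟩
    rw [Nat.cast_mod_mul_of_cast_mul_eq_zero hdt, Nat.cast_add, Nat.cast_pred (by omega)]
    convert hj.2 using 2
    linear_combination hdt
  · intro j hj
    simp only [coe_filter, mem_range, Set.mem_ofPred_eq] at hj
    dsimp only
    rw [Nat.mod_add_mod, add_assoc, Nat.add_sub_cancel' (by omega), Nat.add_mod_right,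
      Nat.mod_eq_of_lt hj.1]
  · intro j hj
    simp only [coe_filter, mem_range, Set.mem_ofPred_eq] at hj
    dsimp only
    rw [Nat.mod_add_mod, add_assoc, Nat.sub_add_cancel (by omega), Nat.add_mod_right,
      Nat.mod_eq_of_lt hj.1]

theorem blockWeight_add_natCast_mul (A : Finset ℕ) (x : ZMod (t * d)) (n : ℕ) :
    blockWeight t d A (x + n * t) = blockWeight t d A x := by
  induction n with
  | zero => simp
  | succ n ih => rw [Nat.cast_succ, add_one_mul, ← add_assoc, blockWeight_add_self, ih]

theorem blockWeight_natCast_sub_eq {l m l' m' : ℕ} (A : Finset ℕ) (hl : l ≤ m + t)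
    (hl' : l' ≤ m' + t) (h : (m + t - l) % t = (m' + t - l') % t) :
    blockWeight t d A (m - l) = blockWeight t d A (m' - l') := by
  have hq := congrArg (Nat.cast : ℕ → ZMod (t * d)) (Nat.div_add_mod (m + t - l) t)
  have hq' := congrArg (Nat.cast : ℕ → ZMod (t * d)) (Nat.div_add_mod (m' + t - l') t)
  rw [h] at hq
  push_cast [Nat.cast_sub hl, Nat.cast_sub hl'] at hq hq'
  rw [← blockWeight_add_natCast_mul A _ ((m' + t - l') / t + 1),
    ← blockWeight_add_natCast_mul A (m' - l' : ZMod (t * d)) ((m + t - l) / t + 1)]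
  congr 1
  push_cast
  linear_combination hq' - hq

end BlockWeight

section Blocks

variable {t d : ℕ}

theorem sigmaT_block_entry (ht : 0 < t) (hd : 0 < d) {l m i j : ℕ} (hl : l < t) (hi : i < d)
    (hj : j < d) :
    (sigmaT t d (m * d + j) + t * d - sigmaT t d (l * d + i)) % (t * d) =
      ((((j : ZMod (t * d)) - i) * t + (m - l))).val := by
  have : NeZero (t * d) := ⟨(Nat.mul_pos ht hd).ne'⟩
  have hσ : i * t + l ≤ t * d := by nlinarith
  rw [sigmaT_mul_add hd _ hj, sigmaT_mul_add hd _ hi, ← ZMod.val_natCast_sub _ hσ]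
  congr 1
  push_cast
  ring

theorem natCast_sub_mul_eq_of_mod_eq {i j i' j' : ℕ} (hi : i ≤ j + d) (hi' : i' ≤ j' + d)
    (h : (j + d - i) % d = (j' + d - i') % d) :
    ((j : ZMod (t * d)) - i) * t = ((j' : ZMod (t * d)) - i') * t := by
  have hdt := ZMod.natCast_mul_natCast_self t d
  have h' := congrArg (fun n : ℕ => (n : ZMod (t * d)) * t) h
  simp only [Nat.cast_mod_mul_of_cast_mul_eq_zero hdt] at h'
  push_cast [Nat.cast_sub hi, Nat.cast_sub hi'] at h'
  linear_combination h'

theorem card_filter_sigmaT_eq_blockWeight (ht : 0 < t) (hd : 0 < d) (A : Finset ℕ) {l : ℕ}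
    (hl : l < t) (m : ℕ) :
    #{j ∈ range d | (sigmaT t d (m * d + j) + t * d - sigmaT t d (l * d)) % (t * d) ∈ A} =
      blockWeight t d A (m - l) := by
  refine congrArg card (filter_congr fun j hj => ?_)
  have := sigmaT_block_entry ht hd (m := m) hl hd (mem_range.mp hj)
  simp only [add_zero, Nat.cast_zero, sub_zero] at this
  rw [this]

end Blocks

/-- The matrix `A_{σ_t}` (whose `(i,j)` entry is `1` iff
`(σ_t(j) - σ_t(i)) mod v ∈ A`) satisfies: its `(i,j)` entry equals its
`(i+d, j+d)` entry for `0 ≤ i,j ≤ v-d-1`; hence it is a block double-circulant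
incidence matrix of a symmetric configuration `v_k`: it is an incidence matrix,
each `d × d` block is circulant (the entry depends only on `(j-i) mod d`), and the
block weights depend only on the block-position difference `(m-l) mod t`. -/
theorem Asigma_block_double_circulant (v t d k : ℕ) (hv : v = t * d)
    (ht : 0 < t) (hd : 0 < d)
    (A : Finset ℕ) (hA : IsModularGolombRulerNat v k A) :
    (∀ i j : ℕ, i + d < v → j + d < v →
      ((sigmaT t d j + v - sigmaT t d i) % v ∈ A ↔
        (sigmaT t d (j + d) + v - sigmaT t d (i + d)) % v ∈ A)) ∧
    IsIncidenceMatrix v k (fun i j : Fin v =>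
      decide ((sigmaT t d j.val + v - sigmaT t d i.val) % v ∈ A)) ∧
    (∀ l m : ℕ, l < t → m < t → ∀ i i' j j' : ℕ, i < d → i' < d → j < d → j' < d →
      (j + d - i) % d = (j' + d - i') % d →
      ((sigmaT t d (m * d + j) + v - sigmaT t d (l * d + i)) % v ∈ A ↔
        (sigmaT t d (m * d + j') + v - sigmaT t d (l * d + i')) % v ∈ A)) ∧
    (∀ l m l' m' : ℕ, l < t → m < t → l' < t → m' < t →
      (m + t - l) % t = (m' + t - l') % t →
      ((Finset.range d).filter (fun j =>
        (sigmaT t d (m * d + j) + v - sigmaT t d (l * d)) % v ∈ A)).card =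
      ((Finset.range d).filter (fun j =>
        (sigmaT t d (m' * d + j) + v - sigmaT t d (l' * d)) % v ∈ A)).card) := by
  subst hv
  have : NeZero (t * d) := ⟨(Nat.mul_pos ht hd).ne'⟩
  refine ⟨fun i j _ _ => ?_, ?_, fun l m hl _ i i' j j' hi hi' hj hj' h => ?_,
    fun l m l' m' hl _ hl' _ h => ?_⟩
  · rw [sigmaT_add_d hd, sigmaT_add_d hd, Nat.add_right_comm, Nat.add_sub_add_right]
  · have hentry (i j : Fin (t * d)) : (sigmaT t d j + t * d - sigmaT t d i) % (t * d) =
        ((sigmaT t d j : ZMod (t * d)) - sigmaT t d i).val :=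
      (ZMod.val_natCast_sub _ (sigmaT_lt hd i.isLt).le).symm
    simp only [hentry]
    exact hA.isIncidenceMatrix_of_bijective (bijective_natCast_sigmaT ht hd)
  · rw [sigmaT_block_entry ht hd hl hi hj, sigmaT_block_entry ht hd hl hi' hj',
      natCast_sub_mul_eq_of_mod_eq (by omega) (by omega) h]
  · rw [card_filter_sigmaT_eq_blockWeight ht hd A hl,
      card_filter_sigmaT_eq_blockWeight ht hd A hl',
      blockWeight_natCast_sub_eq A (by omega) (by omega) h]
end
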